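/- Let K be a fixed positive integer, let ε > 0, and let b : [1,∞) → [0,∞) be a nondecreasing function with b(m) − log m = o(√(log m)) as m → ∞. Then Σ_{n=K}^{N−1} exp( −b(n/K) − ε·√(2·b(n/K)) ) = o(log N) as N → ∞. -/

import Mathlib

open Filter

lemma pow4_le_exp {x : ℝ} (hx : 0 ≤ x) : x^4 / 256 ≤ Real.exp x := by
  have h1 : x/4 ≤ Real.exp (x/4) := by
    have := Real.add_one_le_exp (x/4); linarith
  have h2 : (x/4)^4 ≤ (Real.exp (x/4))^4 := pow_le_pow_left₀ (by linarith) h1 4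
  have h3 : (Real.exp (x/4))^4 = Real.exp x := by
    rw [← Real.exp_nat_mul]; congr 1; push_cast; ring
  calc x^4/256 = (x/4)^4 := by ring
    _ ≤ (Real.exp (x/4))^4 := h2
    _ = Real.exp x := h3

lemma bertrand_summable : Summable (fun n : ℕ => 1 / ((n:ℝ) * Real.log n ^ 2)) := by
  rw [← summable_nat_add_iff 3]
  have hnn : ∀ n : ℕ, 0 ≤ 1 / (((n+3:ℕ):ℝ) * Real.log ((n+3:ℕ):ℝ) ^ 2) := by
    intro n
    apply div_nonneg zero_le_one
    push_cast
    have : (0:ℝ) ≤ (n:ℝ) + 3 := by positivity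
    nlinarith [sq_nonneg (Real.log ((n:ℝ)+3))]
  have hmono : ∀ ⦃m n : ℕ⦄, 0 < m → m ≤ n →
      1 / (((n+3:ℕ):ℝ) * Real.log ((n+3:ℕ):ℝ) ^ 2) ≤
      1 / (((m+3:ℕ):ℝ) * Real.log ((m+3:ℕ):ℝ) ^ 2) := by
    intro m n _ hmn
    have hc : ((m:ℝ)+3) ≤ ((n:ℝ)+3) := by
      have : (m:ℝ) ≤ n := Nat.cast_le.mpr hmn
      linarith
    have hlpos : 0 < Real.log ((m:ℝ)+3) :=
      Real.log_pos (by have : (0:ℝ) ≤ (m:ℝ) := Nat.cast_nonneg m; linarith)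
    have hlle : Real.log ((m:ℝ)+3) ≤ Real.log ((n:ℝ)+3) :=
      Real.log_le_log (by positivity) hc
    apply one_div_le_one_div_of_le
    · push_cast; positivity
    · push_cast
      apply mul_le_mul hc (by nlinarith) (by positivity) (by positivity)
  apply (summable_condensed_iff_of_nonneg hnn hmono).mp
  have hsum : Summable (fun k : ℕ => (4 / Real.log 2 ^ 2) * (1 / ((k:ℝ)+1)^2)) := by
    apply Summable.mul_left
    have h := (Real.summable_one_div_nat_pow (p := 2)).mpr (by norm_num)
    have := (summable_nat_add_iff 1).mpr h
    apply this.congr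
    intro k; push_cast; ring
  apply Summable.of_nonneg_of_le _ _ hsum
  · intro k
    have h1 : (1:ℝ) ≤ ((2^k+3:ℕ):ℝ) := by
      have h0 : (0:ℝ) ≤ (2:ℝ)^k := by positivity
      push_cast; linarith
    have : (0:ℝ) ≤ 1 / (((2^k+3:ℕ):ℝ) * Real.log ((2^k+3:ℕ):ℝ) ^ 2) := by
      apply div_nonneg zero_le_one
      have := Real.log_nonneg h1
      positivity
    positivity
  · intro k
    have hl2 : 0 < Real.log 2 := Real.log_pos (by norm_num)
    set t : ℝ := (2:ℝ)^k with ht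
    have htpos : (1:ℝ) ≤ t := one_le_pow₀ (by norm_num)
    have hcast : ((2^k+3:ℕ):ℝ) = t + 3 := by push_cast; ring
    rw [hcast]
    have hlog : ((k:ℝ)+1) * Real.log 2 / 2 ≤ Real.log (t+3) := by
      have hsq : (2:ℝ)^(k+1) ≤ (t+3)^2 := by
        have : (2:ℝ)^(k+1) = 2*t := by rw [pow_succ]; ring
        nlinarith
      have := Real.log_le_log (by positivity) hsq
      rw [Real.log_pow, Real.log_pow] at this
      push_cast at this
      linarith
    have hlogpos : 0 < Real.log (t+3) := Real.log_pos (by linarith)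
    have hden : t * (((k:ℝ)+1) * Real.log 2 / 2)^2 ≤ (t+3) * Real.log (t+3)^2 := by
      apply mul_le_mul (by linarith)
        (by nlinarith [mul_pos (by positivity : (0:ℝ) < (k:ℝ)+1) hl2])
        (by positivity) (by linarith)
    calc (2:ℝ)^k * (1/((t+3) * Real.log (t+3)^2))
        ≤ (2:ℝ)^k * (1/(t * (((k:ℝ)+1) * Real.log 2 / 2)^2)) := by
          apply mul_le_mul_of_nonneg_left _ (by positivity)
          apply one_div_le_one_div_of_le (by positivity) hden
      _ = (4 / Real.log 2 ^ 2) * (1 / ((k:ℝ)+1)^2) := by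
          rw [← ht]; field_simp; ring

lemma final_eq' (x y z w : ℝ) (hx : x ≠ 0) (hy : y ≠ 0) (hz : z ≠ 0) (hw : w ≠ 0) :
    (1/(x/y)) * (256/(z * (w^2/4))) = (1024 * y / z) * (1/(x * w^2)) := by
  field_simp
  ring

set_option maxHeartbeats 1000000 in
lemma eventual_bound (K : ℕ) (hK : 0 < K) (ε : ℝ) (hε : 0 < ε)
    (b : ℝ → ℝ)
    (hblog : Tendsto (fun m : ℝ => (b m - Real.log m) / Real.sqrt (Real.log m))
      atTop (nhds 0)) :
    ∀ᶠ n : ℕ in atTop,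
      Real.exp (-(b ((n : ℝ) / K)) - ε * Real.sqrt (2 * b ((n : ℝ) / K))) ≤
        (1024 * (K:ℝ) / (ε/2)^4) * (1 / ((n:ℝ) * Real.log n ^ 2)) := by
  have hKpos : (0:ℝ) < K := by exact_mod_cast hK
  have hmt : Tendsto (fun n : ℕ => (n:ℝ)/K) atTop atTop :=
    tendsto_natCast_atTop_atTop.atTop_div_const hKpos
  have h1 : ∀ᶠ m : ℝ in atTop, |b m - Real.log m| / |Real.sqrt (Real.log m)| < ε/2 := by
    have := Metric.tendsto_nhds.mp hblog (ε/2) (by positivity)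
    simpa [Real.dist_eq, abs_div] using this
  filter_upwards [hmt.eventually h1, hmt.eventually_ge_atTop (Real.exp (ε^2)),
    hmt.eventually_ge_atTop (Real.exp 1), eventually_ge_atTop (K^2),
    eventually_ge_atTop 3] with n hq hE2 hE1 hK2 h3n
  set m : ℝ := (n:ℝ)/K with hm
  have hnpos : (0:ℝ) < n := by
    have : (3:ℝ) ≤ n := by exact_mod_cast h3n
    linarith
  have hm1 : (1:ℝ) ≤ m := le_trans (Real.one_le_exp zero_le_one) hE1
  have hmpos : 0 < m := lt_of_lt_of_le one_pos hm1
  have hlm1 : 1 ≤ Real.log m := by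
    have := Real.log_le_log (Real.exp_pos 1) hE1
    rwa [Real.log_exp] at this
  have hlm_eps : ε^2 ≤ Real.log m := by
    have := Real.log_le_log (Real.exp_pos _) hE2
    rwa [Real.log_exp] at this
  set s : ℝ := Real.sqrt (Real.log m) with hs
  have hs1 : 1 ≤ s := by
    rw [hs, show (1:ℝ) = Real.sqrt 1 from Real.sqrt_one.symm]
    exact Real.sqrt_le_sqrt hlm1
  have hs2 : s^2 = Real.log m := Real.sq_sqrt (by linarith)
  have hse : ε ≤ s := by
    have := Real.sqrt_le_sqrt hlm_eps
    rwa [Real.sqrt_sq hε.le] at this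
  have hspos : 0 < s := by linarith
  have habs : |b m - Real.log m| < (ε/2) * s := by
    rw [abs_of_pos hspos] at hq
    exact (div_lt_iff₀ hspos).mp hq
  have hb_low : Real.log m - (ε/2)*s ≤ b m := by
    have := abs_lt.mp habs; linarith
  have hb_half : Real.log m / 2 ≤ b m := by nlinarith
  have hsqrt2b : s ≤ Real.sqrt (2 * b m) := by
    have h2b : s^2 ≤ 2 * b m := by nlinarith
    calc s = Real.sqrt (s^2) := (Real.sqrt_sq (by linarith)).symm
      _ ≤ _ := Real.sqrt_le_sqrt h2b
  have hexp_arg : -(b m) - ε * Real.sqrt (2 * b m) ≤ -(Real.log m) - (ε/2) * s := by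
    have := mul_le_mul_of_nonneg_left hsqrt2b hε.le
    linarith
  have hexp_split : Real.exp (-(Real.log m) - (ε/2)*s) = (1/m) * Real.exp (-((ε/2)*s)) := by
    rw [show -(Real.log m) - (ε/2)*s = (-Real.log m) + (-((ε/2)*s)) by ring,
      Real.exp_add, Real.exp_neg, Real.exp_log hmpos, one_div]
  have hE : Real.exp (-((ε/2)*s)) ≤ 256 / ((ε/2)*s)^4 := by
    have h := pow4_le_exp (show (0:ℝ) ≤ (ε/2)*s by positivity)
    have h2 : (0:ℝ) < ((ε/2)*s)^4/256 := by positivity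
    rw [Real.exp_neg, ← one_div]
    calc 1/Real.exp ((ε/2)*s) ≤ 1/(((ε/2)*s)^4/256) := one_div_le_one_div_of_le h2 h
      _ = 256/((ε/2)*s)^4 := one_div_div _ _
  have hx4 : ((ε/2)*s)^4 = (ε/2)^4 * (Real.log m)^2 := by
    have hs4 : s^4 = (Real.log m)^2 := by nlinarith
    calc ((ε/2)*s)^4 = (ε/2)^4 * s^4 := by ring
      _ = _ := by rw [hs4]
  have hlogm_eq : Real.log m = Real.log n - Real.log K :=
    Real.log_div (ne_of_gt hnpos) (ne_of_gt hKpos)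
  have hlogK : 2 * Real.log K ≤ Real.log n := by
    have h1 : Real.log ((K:ℝ)^2) ≤ Real.log n :=
      Real.log_le_log (by positivity) (by exact_mod_cast hK2)
    rw [Real.log_pow] at h1
    push_cast at h1
    linarith
  have hlogn_half : Real.log n / 2 ≤ Real.log m := by rw [hlogm_eq]; linarith
  have hlogKnn : 0 ≤ Real.log K := Real.log_nonneg (by exact_mod_cast hK)
  have hlogn_pos : 0 < Real.log n := by rw [hlogm_eq] at hlm1; linarith
  have hsq : (Real.log n)^2 / 4 ≤ (Real.log m)^2 := by
    have h := pow_le_pow_left₀ (by positivity : (0:ℝ) ≤ Real.log n / 2) hlogn_half 2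
    calc (Real.log n)^2/4 = (Real.log n/2)^2 := by ring
      _ ≤ _ := h
  have hne1 : (n:ℝ) ≠ 0 := ne_of_gt hnpos
  have hne2 : (K:ℝ) ≠ 0 := ne_of_gt hKpos
  have hne3 : Real.log n ≠ 0 := ne_of_gt hlogn_pos
  calc Real.exp (-(b m) - ε * Real.sqrt (2*b m))
      ≤ Real.exp (-(Real.log m) - (ε/2)*s) := Real.exp_le_exp.mpr hexp_arg
    _ = (1/m) * Real.exp (-((ε/2)*s)) := hexp_split
    _ ≤ (1/m) * (256/((ε/2)^4 * (Real.log m)^2)) := by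
        rw [← hx4]
        exact mul_le_mul_of_nonneg_left hE (by positivity)
    _ ≤ (1/m) * (256/((ε/2)^4 * ((Real.log n)^2/4))) := by
        apply mul_le_mul_of_nonneg_left _ (by positivity)
        apply div_le_div_of_nonneg_left (by norm_num) (by positivity)
        exact mul_le_mul_of_nonneg_left hsq (by positivity)
    _ = (1024 * (K:ℝ) / (ε/2)^4) * (1 / ((n:ℝ) * Real.log n ^ 2)) := by
        rw [hm]
        exact final_eq' _ _ _ _ hne1 hne2 (by positivity) hne3

theorem stmt_10 (K : ℕ) (hK : 0 < K) (ε : ℝ) (hε : 0 < ε)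
    (b : ℝ → ℝ) (hb0 : ∀ m : ℝ, 1 ≤ m → 0 ≤ b m)
    (hbmono : ∀ m m' : ℝ, 1 ≤ m → m ≤ m' → b m ≤ b m')
    (hblog : Tendsto (fun m : ℝ => (b m - Real.log m) / Real.sqrt (Real.log m))
      atTop (nhds 0)) :
    Tendsto (fun N : ℕ =>
        (∑ n ∈ Finset.Icc K (N - 1),
          Real.exp (-(b ((n : ℝ) / K)) - ε * Real.sqrt (2 * b ((n : ℝ) / K)))) / Real.log N)
      atTop (nhds 0) := by
  set B : ℝ := 1024 * (K:ℝ) / (ε/2)^4 with hB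
  have hBpos : 0 < B := by
    have : (0:ℝ) < K := by exact_mod_cast hK
    positivity
  set f : ℕ → ℝ := fun n => 1 / ((n:ℝ) * Real.log n ^ 2) with hf
  have hfnn : ∀ n, 0 ≤ f n := by
    intro n
    apply div_nonneg zero_le_one
    positivity
  set term : ℕ → ℝ := fun n =>
    Real.exp (-(b ((n : ℝ) / K)) - ε * Real.sqrt (2 * b ((n : ℝ) / K))) with hterm
  obtain ⟨N₁, hN₁⟩ := eventually_atTop.mp (eventual_bound K hK ε hε b hblog)
  set h : ℕ → ℝ := fun n => (if n < N₁ then term n else 0) +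
    (if n < N₁ then 0 else B * f n) with hh
  have hhnn : ∀ n, 0 ≤ h n := by
    intro n
    apply add_nonneg
    · split
      · exact (Real.exp_pos _).le
      · exact le_refl 0
    · split
      · exact le_refl 0
      · exact mul_nonneg hBpos.le (hfnn n)
  have hth : ∀ n, term n ≤ h n := by
    intro n
    by_cases hn : n < N₁
    · simp only [hh, if_pos hn]
      simp
    · simp only [hh, if_neg hn, zero_add]
      exact hN₁ n (le_of_not_gt hn)
  have hsum : Summable h := by
    apply Summable.add
    · apply summable_of_ne_finset_zero (s := Finset.range N₁)
      intro n hn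
      rw [if_neg (by simpa using hn)]
    · apply Summable.of_nonneg_of_le _ _ (bertrand_summable.mul_left B)
      · intro n
        split
        · exact le_refl 0
        · exact mul_nonneg hBpos.le (hfnn n)
      · intro n
        split
        · exact mul_nonneg hBpos.le (hfnn n)
        · exact le_refl _
  set C : ℝ := ∑' n, h n with hC
  have hS_nonneg : ∀ N : ℕ, 0 ≤ ∑ n ∈ Finset.Icc K (N - 1), term n := fun N =>
    Finset.sum_nonneg fun n _ => (Real.exp_pos _).le
  have hS_le : ∀ N : ℕ, (∑ n ∈ Finset.Icc K (N - 1), term n) ≤ C := by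
    intro N
    calc (∑ n ∈ Finset.Icc K (N - 1), term n)
        ≤ ∑ n ∈ Finset.Icc K (N - 1), h n := Finset.sum_le_sum fun n _ => hth n
      _ ≤ C := Summable.sum_le_tsum _ (fun n _ => hhnn n) hsum
  have hlogt : Tendsto (fun N : ℕ => Real.log N) atTop atTop :=
    Real.tendsto_log_atTop.comp tendsto_natCast_atTop_atTop
  have hCt : Tendsto (fun N : ℕ => C / Real.log N) atTop (nhds 0) :=
    Tendsto.div_atTop tendsto_const_nhds hlogt
  apply tendsto_of_tendsto_of_tendsto_of_le_of_le' tendsto_const_nhds hCt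
  · filter_upwards [hlogt.eventually_gt_atTop 0] with N hN
    exact div_nonneg (hS_nonneg N) hN.le
  · filter_upwards [hlogt.eventually_gt_atTop 0] with N hN
    exact div_le_div_of_nonneg_right (hS_le N) hN.le
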